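/- Let n ≥ 2, let V : ℝ^{1+n} → ℝ be continuous, let f₁, f₂, f₃ : ℝ^{1+n} → ℝ, and suppose u : ℝ³ × ℝ^{1+n} → ℝ, written (ε,x) ↦ u_ε(x) with ε = (ε₁,ε₂,ε₃), is smooth and satisfies, for every ε in a neighborhood of 0 in ℝ³, the equation □u_ε + V u_ε + u_ε³ = ε₁f₁ + ε₂f₂ + ε₃f₃ on ℝ^{1+n}, together with u₀ ≡ 0. Then: (i) for each j = 1,2,3, the function u⁽ʲ⁾ := ∂_{ε_j} u_ε |_{ε=0} satisfies □u⁽ʲ⁾ + V u⁽ʲ⁾ = f_j; and (ii) the function v := ∂_{ε₁}∂_{ε₂}∂_{ε₃} u_ε |_{ε=0} satisfies □v + Vv = −6 u⁽¹⁾u⁽²⁾u⁽³⁾ on ℝ^{1+n}. -/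

import Mathlib

/- Statement 10: linearization of the cubic wave equation. If
`□u_ε + V u_ε + u_ε³ = ε₁f₁ + ε₂f₂ + ε₃f₃` for all ε near 0 ∈ ℝ³ and u₀ ≡ 0,
then the first linearizations u⁽ʲ⁾ = ∂_{ε_j}u_ε|₀ solve `□u⁽ʲ⁾ + Vu⁽ʲ⁾ = f_j`,
and the threefold linearization v = ∂_{ε₁}∂_{ε₂}∂_{ε₃}u_ε|₀ solves
`□v + Vv = −6 u⁽¹⁾u⁽²⁾u⁽³⁾`. -/

noncomputable section

/-- Spacetime `ℝ^{1+n}`, coordinate `0` being time. -/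
abbrev X (n : ℕ) := EuclideanSpace ℝ (Fin (n + 1))

/-- Partial derivative in the `i`-th coordinate direction. -/
def pd {n : ℕ} (i : Fin (n + 1)) (u : X n → ℝ) (x : X n) : ℝ :=
  fderiv ℝ u x (EuclideanSpace.single i 1)

/-- The d'Alembert operator `□u = ∂²_t u − Σ_j ∂²_j u`. -/
def dAlembert {n : ℕ} (u : X n → ℝ) (x : X n) : ℝ :=
  pd 0 (pd 0 u) x - ∑ j : Fin n, pd j.succ (pd j.succ u) x

/-- First linearization `u⁽ʲ⁾ = ∂_{ε_j} u_ε |_{ε=0}`. -/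
def lin1 {n : ℕ} (u : (Fin 3 → ℝ) → X n → ℝ) (j : Fin 3) (x : X n) : ℝ :=
  fderiv ℝ (fun ε => u ε x) 0 (Pi.single j 1)

/-- Threefold linearization `∂_{ε₁}∂_{ε₂}∂_{ε₃} u_ε |_{ε=0}`. -/
def lin3 {n : ℕ} (u : (Fin 3 → ℝ) → X n → ℝ) (x : X n) : ℝ :=
  deriv (fun s₁ => deriv (fun s₂ => deriv (fun s₃ => u ![s₁, s₂, s₃] x) 0) 0) 0

open Filter Topology
noncomputable section
variable {E F : Type*} [NormedAddCommGroup E] [NormedSpace ℝ E]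
  [NormedAddCommGroup F] [NormedSpace ℝ F]

def Dv (v : E) (g : E → ℝ) : E → ℝ := fun p => fderiv ℝ g p v

lemma Dv_contDiff {g : E → ℝ} (hg : ContDiff ℝ (⊤:ℕ∞) g) (v : E) :
    ContDiff ℝ (⊤:ℕ∞) (Dv v g) := by
  have h1 : ContDiff ℝ (⊤:ℕ∞) (fderiv ℝ g) := hg.fderiv_right (by simp)
  exact (ContinuousLinearMap.apply ℝ ℝ v).contDiff.comp h1

lemma Dv_comm_apply {g : E → ℝ} (hg : ContDiff ℝ (⊤:ℕ∞) g) (v w : E) (p : E) :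
    Dv v (Dv w g) p = Dv w (Dv v g) p := by
  have hdg : Differentiable ℝ g := hg.differentiable (by simp)
  have hfg : ContDiff ℝ (⊤:ℕ∞) (fderiv ℝ g) := hg.fderiv_right (by simp)
  have hdfg : Differentiable ℝ (fderiv ℝ g) := hfg.differentiable (by simp)
  have hsymm : ∀ a b : E, fderiv ℝ (fderiv ℝ g) p a b = fderiv ℝ (fderiv ℝ g) p b a :=
    second_derivative_symmetric (fun y => (hdg y).hasFDerivAt) (hdfg p).hasFDerivAt
  have key : ∀ a : E, fderiv ℝ (fun q => fderiv ℝ g q a) p =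
      (fderiv ℝ (fderiv ℝ g) p).flip a := by
    intro a
    have := fderiv_clm_apply (c := fderiv ℝ g) (u := fun _ => a) (hdfg p)
      (differentiableAt_const a)
    simpa using this
  show fderiv ℝ (fun q => fderiv ℝ g q w) p v = fderiv ℝ (fun q => fderiv ℝ g q v) p w
  rw [key w, key v]
  exact hsymm v w

lemma Dv_comm {g : E → ℝ} (hg : ContDiff ℝ (⊤:ℕ∞) g) (v w : E) :
    Dv v (Dv w g) = Dv w (Dv v g) := funext (Dv_comm_apply hg v w)

lemma Dv_add_apply {f g : E → ℝ} {p : E} (hf : DifferentiableAt ℝ f p)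
    (hg : DifferentiableAt ℝ g p) (v : E) :
    Dv v (fun q => f q + g q) p = Dv v f p + Dv v g p := by
  simp [Dv, fderiv_fun_add hf hg]

lemma Dv_sub_apply {f g : E → ℝ} {p : E} (hf : DifferentiableAt ℝ f p)
    (hg : DifferentiableAt ℝ g p) (v : E) :
    Dv v (fun q => f q - g q) p = Dv v f p - Dv v g p := by
  simp [Dv, fderiv_fun_sub hf hg]

lemma Dv_mul_apply {f g : E → ℝ} {p : E} (hf : DifferentiableAt ℝ f p)
    (hg : DifferentiableAt ℝ g p) (v : E) :
    Dv v (fun q => f q * g q) p = Dv v f p * g p + f p * Dv v g p := by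
  simp [Dv, fderiv_fun_mul hf hg]; ring

lemma Dv_const_mul_apply {g : E → ℝ} {p : E} (hg : DifferentiableAt ℝ g p) (c : ℝ) (v : E) :
    Dv v (fun q => c * g q) p = c * Dv v g p := by
  simp [Dv, fderiv_const_mul hg c]

lemma Dv_sum_apply {ι : Type*} {s : Finset ι} {f : ι → E → ℝ} {p : E}
    (hf : ∀ i ∈ s, DifferentiableAt ℝ (f i) p) (v : E) :
    Dv v (fun q => ∑ i ∈ s, f i q) p = ∑ i ∈ s, Dv v (f i) p := by
  simp [Dv, fderiv_fun_sum hf]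

lemma Dv_add {f g : E → ℝ} (hf : Differentiable ℝ f) (hg : Differentiable ℝ g) (v : E) :
    Dv v (fun q => f q + g q) = fun p => Dv v f p + Dv v g p :=
  funext fun p => Dv_add_apply (hf p) (hg p) v

lemma Dv_sub {f g : E → ℝ} (hf : Differentiable ℝ f) (hg : Differentiable ℝ g) (v : E) :
    Dv v (fun q => f q - g q) = fun p => Dv v f p - Dv v g p :=
  funext fun p => Dv_sub_apply (hf p) (hg p) v

lemma Dv_const_mul {g : E → ℝ} (hg : Differentiable ℝ g) (c : ℝ) (v : E) :
    Dv v (fun q => c * g q) = fun p => c * Dv v g p :=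
  funext fun p => Dv_const_mul_apply (hg p) c v

lemma Dv_mul3_apply {f g h : E → ℝ} {p : E} (hf : DifferentiableAt ℝ f p)
    (hg : DifferentiableAt ℝ g p) (hh : DifferentiableAt ℝ h p) (v : E) :
    Dv v (fun q => f q * g q * h q) p =
      Dv v f p * g p * h p + f p * Dv v g p * h p + f p * g p * Dv v h p := by
  rw [Dv_mul_apply (hf.fun_mul hg) hh, Dv_mul_apply hf hg]; ring

lemma Dv_mul3 {f g h : E → ℝ} (hf : Differentiable ℝ f) (hg : Differentiable ℝ g)
    (hh : Differentiable ℝ h) (v : E) :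
    Dv v (fun q => f q * g q * h q) =
      fun p => Dv v f p * g p * h p + f p * Dv v g p * h p + f p * g p * Dv v h p :=
  funext fun p => Dv_mul3_apply (hf p) (hg p) (hh p) v

/-- slice in the second variable -/
lemma Dv_slice_right {G : E × F → ℝ} (hG : Differentiable ℝ G) (e : E) (x : F) (v : F) :
    fderiv ℝ (fun y => G (e, y)) x v = Dv ((0 : E), v) G (e, x) := by
  have h1 : HasFDerivAt (fun y : F => (e, y))
      ((0 : F →L[ℝ] E).prod (ContinuousLinearMap.id ℝ F)) x :=
    HasFDerivAt.prodMk (hasFDerivAt_const e x) (hasFDerivAt_id x)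
  have h2 := ((hG (e, x)).hasFDerivAt.comp x h1).fderiv
  rw [show (fun y : F => G (e, y)) = G ∘ (fun y : F => (e, y)) from rfl, h2]
  simp [Dv]

/-- slice in the first variable -/
lemma Dv_slice_left {G : E × F → ℝ} (hG : Differentiable ℝ G) (e : E) (x : F) (v : E) :
    fderiv ℝ (fun e' => G (e', x)) e v = Dv (v, (0 : F)) G (e, x) := by
  have h1 : HasFDerivAt (fun e' : E => (e', x))
      ((ContinuousLinearMap.id ℝ E).prod (0 : E →L[ℝ] F)) e :=
    HasFDerivAt.prodMk (hasFDerivAt_id e) (hasFDerivAt_const x e)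
  have h2 := ((hG (e, x)).hasFDerivAt.comp e h1).fderiv
  rw [show (fun e' : E => G (e', x)) = G ∘ (fun e' : E => (e', x)) from rfl, h2]
  simp [Dv]

lemma contDiff_slice_right {G : E × F → ℝ} (hG : ContDiff ℝ (⊤:ℕ∞) G) (e : E) :
    ContDiff ℝ (⊤:ℕ∞) (fun y => G (e, y)) :=
  hG.comp (ContDiff.prodMk contDiff_const contDiff_id)

lemma contDiff_slice_left {G : E × F → ℝ} (hG : ContDiff ℝ (⊤:ℕ∞) G) (x : F) :
    ContDiff ℝ (⊤:ℕ∞) (fun e => G (e, x)) :=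
  hG.comp (ContDiff.prodMk contDiff_id contDiff_const)

lemma line_deriv {h : E → ℝ} (hh : ContDiff ℝ (⊤:ℕ∞) h) (c v : E) :
    deriv (fun s : ℝ => h (c + s • v)) 0 = Dv v h c := by
  have hline : HasDerivAt (fun s : ℝ => c + s • v) v 0 := by
    simpa using ((hasDerivAt_id (0:ℝ)).smul_const v).const_add c
  have hd : DifferentiableAt ℝ h (c + (0:ℝ) • v) := (hh.differentiable (by simp)) _
  have := (hd.hasFDerivAt.comp_hasDerivAt 0 hline).deriv
  simpa [Dv, Function.comp_def] using this

namespace Stmt10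
variable {n : ℕ}

def Adir (j : Fin 3) : (Fin 3 → ℝ) × X n := (Pi.single j 1, 0)
def Bdir (i : Fin (n + 1)) : (Fin 3 → ℝ) × X n := (0, EuclideanSpace.single i 1)

/-- the d'Alembertian lifted to the product space -/
def DAop (G : (Fin 3 → ℝ) × X n → ℝ) : (Fin 3 → ℝ) × X n → ℝ :=
  fun p => Dv (Bdir 0) (Dv (Bdir 0) G) p -
    ∑ j : Fin n, Dv (Bdir j.succ) (Dv (Bdir j.succ) G) p

lemma DAop_contDiff {G : (Fin 3 → ℝ) × X n → ℝ} (hG : ContDiff ℝ (⊤:ℕ∞) G) :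
    ContDiff ℝ (⊤:ℕ∞) (DAop G) :=
  (Dv_contDiff (Dv_contDiff hG _) _).sub
    (ContDiff.sum fun j _ => Dv_contDiff (Dv_contDiff hG _) _)

lemma pd_slice {G : (Fin 3 → ℝ) × X n → ℝ} (hG : ContDiff ℝ (⊤:ℕ∞) G)
    (i : Fin (n + 1)) (ε : Fin 3 → ℝ) :
    pd i (fun y => G (ε, y)) = fun x => Dv (Bdir i) G (ε, x) :=
  funext fun x => Dv_slice_right (hG.differentiable (by simp)) ε x _

lemma dAlembert_slice {G : (Fin 3 → ℝ) × X n → ℝ} (hG : ContDiff ℝ (⊤:ℕ∞) G)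
    (ε : Fin 3 → ℝ) (x : X n) :
    dAlembert (fun y => G (ε, y)) x = DAop G (ε, x) := by
  unfold dAlembert DAop
  congr 1
  · rw [pd_slice hG 0 ε, pd_slice (Dv_contDiff hG _) 0 ε]
  · refine Finset.sum_congr rfl fun j _ => ?_
    rw [pd_slice hG j.succ ε, pd_slice (Dv_contDiff hG _) j.succ ε]

lemma Dv_eps_slice {G : (Fin 3 → ℝ) × X n → ℝ} (hG : ContDiff ℝ (⊤:ℕ∞) G)
    (j : Fin 3) (x : X n) :
    Dv (Pi.single j 1) (fun e => G (e, x)) = fun ε => Dv (Adir j) G (ε, x) :=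
  funext fun ε => Dv_slice_left (hG.differentiable (by simp)) ε x _

lemma Dv_DAop {G : (Fin 3 → ℝ) × X n → ℝ} (hG : ContDiff ℝ (⊤:ℕ∞) G)
    (v : (Fin 3 → ℝ) × X n) :
    Dv v (DAop G) = DAop (Dv v G) := by
  have hdiff : ∀ (w : (Fin 3 → ℝ) × X n), Differentiable ℝ (Dv w (Dv w G)) :=
    fun w => (Dv_contDiff (Dv_contDiff hG w) w).differentiable (by simp)
  have key : ∀ (b : (Fin 3 → ℝ) × X n),
      Dv v (Dv b (Dv b G)) = Dv b (Dv b (Dv v G)) := fun b =>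
    (Dv_comm (Dv_contDiff hG b) v b).trans (congrArg (Dv b) (Dv_comm hG v b))
  funext p
  unfold DAop
  rw [Dv_sub_apply ((hdiff _) p) (Differentiable.fun_sum (fun j _ => hdiff _) p) v,
    Dv_sum_apply (fun j _ => (hdiff _) p) v]
  simp only [key]

lemma vec3_eq2 (s1 s2 s3 : ℝ) :
    (![s1,s2,s3] : Fin 3 → ℝ) = ![s1,s2,0] + s3 • (Pi.single 2 1 : Fin 3 → ℝ) := by
  funext k; fin_cases k <;> simp [Pi.single_apply]

lemma vec3_eq1 (s1 s2 : ℝ) :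
    (![s1,s2,0] : Fin 3 → ℝ) = ![s1,0,0] + s2 • (Pi.single 1 1 : Fin 3 → ℝ) := by
  funext k; fin_cases k <;> simp [Pi.single_apply]

lemma vec3_eq0 (s1 : ℝ) :
    (![s1,0,0] : Fin 3 → ℝ) = 0 + s1 • (Pi.single 0 1 : Fin 3 → ℝ) := by
  funext k; fin_cases k <;> simp [Pi.single_apply]

def wfun (u : (Fin 3 → ℝ) → X n → ℝ) : (Fin 3 → ℝ) × X n → ℝ := fun p => u p.1 p.2

def phi (u : (Fin 3 → ℝ) → X n → ℝ) (x : X n) : (Fin 3 → ℝ) → ℝ := fun ε => wfun u (ε, x)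

section Main
variable {u : (Fin 3 → ℝ) → X n → ℝ}

lemma phi_contDiff (hu : ContDiff ℝ (⊤:ℕ∞) (wfun u)) (x : X n) : ContDiff ℝ (⊤:ℕ∞) (phi u x) := contDiff_slice_left hu x

lemma Dv_phi (hu : ContDiff ℝ (⊤:ℕ∞) (wfun u)) (x : X n) (j : Fin 3) :
    Dv (Pi.single j 1) (phi u x) = fun ε => Dv (Adir j) (wfun u) (ε, x) :=
  Dv_eps_slice hu j x

lemma lin1_eq (hu : ContDiff ℝ (⊤:ℕ∞) (wfun u)) (j : Fin 3) : lin1 u j = fun x => Dv (Adir j) (wfun u) (0, x) := by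
  funext x
  exact congrFun (Dv_eps_slice hu j x) 0

lemma lin3_eq (hu : ContDiff ℝ (⊤:ℕ∞) (wfun u)) : lin3 u = fun x => Dv (Adir 0) (Dv (Adir 1) (Dv (Adir 2) (wfun u))) (0, x) := by
  funext x
  have hφ : ContDiff ℝ (⊤:ℕ∞) (phi u x) := phi_contDiff hu x
  have h3 : ∀ s1 s2 : ℝ, deriv (fun s3 => u ![s1,s2,s3] x) 0
      = Dv (Pi.single 2 1) (phi u x) ![s1,s2,0] := by
    intro s1 s2
    have he : (fun s3 : ℝ => u ![s1,s2,s3] x)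
        = fun s3 => phi u x (![s1,s2,0] + s3 • (Pi.single 2 1 : Fin 3 → ℝ)) := by
      funext s3; rw [← vec3_eq2]; rfl
    rw [he, line_deriv hφ]
  have h2 : ∀ s1 : ℝ, deriv (fun s2 => deriv (fun s3 => u ![s1,s2,s3] x) 0) 0
      = Dv (Pi.single 1 1) (Dv (Pi.single 2 1) (phi u x)) ![s1,0,0] := by
    intro s1
    have he : (fun s2 : ℝ => deriv (fun s3 => u ![s1,s2,s3] x) 0)
        = fun s2 => Dv (Pi.single 2 1) (phi u x) (![s1,0,0] + s2 • (Pi.single 1 1 : Fin 3 → ℝ)) := by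
      funext s2; rw [h3 s1 s2, vec3_eq1]
    rw [he, line_deriv (Dv_contDiff hφ _)]
  have h1 : lin3 u x
      = Dv (Pi.single 0 1) (Dv (Pi.single 1 1) (Dv (Pi.single 2 1) (phi u x))) 0 := by
    unfold lin3
    have he : (fun s1 : ℝ => deriv (fun s2 => deriv (fun s3 => u ![s1,s2,s3] x) 0) 0)
        = fun s1 => Dv (Pi.single 1 1) (Dv (Pi.single 2 1) (phi u x))
            ((0 : Fin 3 → ℝ) + s1 • (Pi.single 0 1 : Fin 3 → ℝ)) := by
      funext s1; rw [h2 s1, vec3_eq0]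
    rw [he, line_deriv (Dv_contDiff (Dv_contDiff hφ _) _)]
  rw [h1, Dv_phi hu x 2, Dv_eps_slice (Dv_contDiff hu _) 1 x,
    Dv_eps_slice (Dv_contDiff (Dv_contDiff hu _) _) 0 x]

end Main

lemma Dv_const_apply {E : Type*} [NormedAddCommGroup E] [NormedSpace ℝ E]
    (c : ℝ) (v p : E) : Dv v (fun _ : E => c) p = 0 := by
  simp [Dv]

lemma Dv_linear_apply (c0 c1 c2 : ℝ) (v p : Fin 3 → ℝ) :
    Dv v (fun ε : Fin 3 → ℝ => ε 0 * c0 + ε 1 * c1 + ε 2 * c2) p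
      = v 0 * c0 + v 1 * c1 + v 2 * c2 := by
  have h : ∀ (i : Fin 3) (c : ℝ), Dv v (fun ε : Fin 3 → ℝ => ε i * c) p = v i * c := by
    intro i c
    have hp : HasFDerivAt (fun ε : Fin 3 → ℝ => ε i)
        (ContinuousLinearMap.proj i : (Fin 3 → ℝ) →L[ℝ] ℝ) p :=
      (ContinuousLinearMap.proj i : (Fin 3 → ℝ) →L[ℝ] ℝ).hasFDerivAt
    have h2 := (hp.mul_const c).fderiv
    show fderiv ℝ (fun ε : Fin 3 → ℝ => ε i * c) p v = v i * c
    rw [h2]; simp [mul_comm]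
  have hd : ∀ (i : Fin 3) (c : ℝ), Differentiable ℝ (fun ε : Fin 3 → ℝ => ε i * c) :=
    fun i c => (ContinuousLinearMap.proj i : (Fin 3 → ℝ) →L[ℝ] ℝ).differentiable.mul_const c
  have e1 : Dv v (fun ε : Fin 3 → ℝ => ε 0 * c0 + ε 1 * c1 + ε 2 * c2) p
      = Dv v (fun ε : Fin 3 → ℝ => ε 0 * c0 + ε 1 * c1) p
        + Dv v (fun ε : Fin 3 → ℝ => ε 2 * c2) p :=
    Dv_add_apply (((hd 0 c0).add (hd 1 c1)) p) ((hd 2 c2) p) v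
  have e2 : Dv v (fun ε : Fin 3 → ℝ => ε 0 * c0 + ε 1 * c1) p
      = Dv v (fun ε : Fin 3 → ℝ => ε 0 * c0) p + Dv v (fun ε : Fin 3 → ℝ => ε 1 * c1) p :=
    Dv_add_apply ((hd 0 c0) p) ((hd 1 c1) p) v
  rw [e1, e2, h 0 c0, h 1 c1, h 2 c2]

section PDE
variable {u : (Fin 3 → ℝ) → X n → ℝ} {V : X n → ℝ} {f : Fin 3 → X n → ℝ}
  {U : Set (Fin 3 → ℝ)}

def gfun (u : (Fin 3 → ℝ) → X n → ℝ) (V : X n → ℝ) (f : Fin 3 → X n → ℝ) (x : X n) :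
    (Fin 3 → ℝ) → ℝ :=
  fun ε => DAop (wfun u) (ε, x) + V x * phi u x ε
    + phi u x ε * phi u x ε * phi u x ε
    - (ε 0 * f 0 x + ε 1 * f 1 x + ε 2 * f 2 x)

lemma gfun_eventually (hu : ContDiff ℝ (⊤:ℕ∞) (wfun u)) (hU : U ∈ nhds 0)
    (heq : ∀ ε ∈ U, ∀ x : X n, dAlembert (u ε) x + V x * u ε x + (u ε x) ^ 3 =
        ε 0 * f 0 x + ε 1 * f 1 x + ε 2 * f 2 x) (x : X n) :
    gfun u V f x =ᶠ[𝓝 0] fun _ => 0 := by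
  filter_upwards [hU] with ε hε
  have h := heq ε hε x
  have hda : dAlembert (u ε) x = DAop (wfun u) (ε, x) := dAlembert_slice hu ε x
  show DAop (wfun u) (ε, x) + V x * phi u x ε
      + phi u x ε * phi u x ε * phi u x ε
      - (ε 0 * f 0 x + ε 1 * f 1 x + ε 2 * f 2 x) = 0
  rw [← hda]
  have hux : phi u x ε = u ε x := rfl
  rw [hux]
  linear_combination h

lemma Dv_gfun (hu : ContDiff ℝ (⊤:ℕ∞) (wfun u)) (h0 : ∀ x : X n, u 0 x = 0)
    (x : X n) (j : Fin 3) :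
    Dv (Pi.single j 1) (gfun u V f x) 0 =
      dAlembert (lin1 u j) x + V x * lin1 u j x - f j x := by
  set W := wfun u with hW
  set P := phi u x with hPdef
  have hP : ContDiff ℝ (⊤:ℕ∞) P := phi_contDiff hu x
  have hPd : Differentiable ℝ P := hP.differentiable (by simp)
  have hQ : ContDiff ℝ (⊤:ℕ∞) (fun ε : Fin 3 → ℝ => DAop W (ε, x)) :=
    contDiff_slice_left (DAop_contDiff hu) x
  have hQd : Differentiable ℝ (fun ε : Fin 3 → ℝ => DAop W (ε, x)) :=
    hQ.differentiable (by simp)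
  have hF4d : Differentiable ℝ
      (fun ε : Fin 3 → ℝ => ε 0 * f 0 x + ε 1 * f 1 x + ε 2 * f 2 x) := by
    have hd : ∀ (i : Fin 3) (c : ℝ), Differentiable ℝ (fun ε : Fin 3 → ℝ => ε i * c) :=
      fun i c => (ContinuousLinearMap.proj i : (Fin 3 → ℝ) →L[ℝ] ℝ).differentiable.mul_const c
    exact ((hd 0 _).add (hd 1 _)).add (hd 2 _)
  set v := (Pi.single j 1 : Fin 3 → ℝ) with hv
  have e1 : Dv v (gfun u V f x) 0
      = Dv v (fun ε => DAop W (ε, x) + V x * P ε + P ε * P ε * P ε) 0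
        - Dv v (fun ε => ε 0 * f 0 x + ε 1 * f 1 x + ε 2 * f 2 x) 0 :=
    Dv_sub_apply (((hQd.add ((hPd.const_mul _))).add ((hPd.mul hPd).mul hPd)) 0) (hF4d 0) v
  have e2 : Dv v (fun ε => DAop W (ε, x) + V x * P ε + P ε * P ε * P ε) 0
      = Dv v (fun ε => DAop W (ε, x) + V x * P ε) 0
        + Dv v (fun ε => P ε * P ε * P ε) 0 :=
    Dv_add_apply ((hQd.add (hPd.const_mul _)) 0) (((hPd.mul hPd).mul hPd) 0) v
  have e3 : Dv v (fun ε => DAop W (ε, x) + V x * P ε) 0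
      = Dv v (fun ε => DAop W (ε, x)) 0 + Dv v (fun ε => V x * P ε) 0 :=
    Dv_add_apply (hQd 0) ((hPd.const_mul _) 0) v
  have hA : Dv v (fun ε => DAop W (ε, x)) 0 = dAlembert (lin1 u j) x := by
    have eA : Dv v (fun ε => DAop W (ε, x)) 0 = Dv (Adir j) (DAop W) (0, x) :=
      congrFun (Dv_eps_slice (DAop_contDiff hu) j x) 0
    rw [eA, Dv_DAop hu (Adir j)]
    have eB : dAlembert (lin1 u j) x = DAop (Dv (Adir j) W) (0, x) := by
      rw [lin1_eq hu j]
      exact dAlembert_slice (Dv_contDiff hu _) 0 x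
    rw [eB]
  have hlin1 : Dv v P 0 = lin1 u j x := by
    have := congrFun (Dv_phi hu x j) 0
    rw [hPdef, hv, this, lin1_eq hu j]
  have hB : Dv v (fun ε => V x * P ε) 0 = V x * lin1 u j x := by
    rw [Dv_const_mul_apply (hPd 0) (V x) v, hlin1]
  have hP0 : P 0 = 0 := h0 x
  have hC : Dv v (fun ε => P ε * P ε * P ε) 0 = 0 := by
    rw [Dv_mul3_apply (hPd 0) (hPd 0) (hPd 0) v, hP0]; ring
  have hD : Dv v (fun ε : Fin 3 → ℝ => ε 0 * f 0 x + ε 1 * f 1 x + ε 2 * f 2 x) 0 = f j x := by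
    rw [Dv_linear_apply, hv]
    fin_cases j <;> simp
  rw [e1, e2, e3, hA, hB, hC, hD]
  ring

lemma Dv3_gfun (hu : ContDiff ℝ (⊤:ℕ∞) (wfun u)) (h0 : ∀ x : X n, u 0 x = 0)
    (x : X n) :
    Dv (Pi.single 0 1) (Dv (Pi.single 1 1) (Dv (Pi.single 2 1) (gfun u V f x))) 0 =
      dAlembert (lin3 u) x + V x * lin3 u x
        + 6 * (lin1 u 0 x * lin1 u 1 x * lin1 u 2 x) := by
  set W := wfun u with hWdef
  set v0 := (Pi.single 0 1 : Fin 3 → ℝ) with hv0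
  set v1 := (Pi.single 1 1 : Fin 3 → ℝ) with hv1
  set v2 := (Pi.single 2 1 : Fin 3 → ℝ) with hv2
  set P := phi u x with hPdef
  have hP : ContDiff ℝ (⊤:ℕ∞) P := phi_contDiff hu x
  set P1 := Dv v1 P with hP1def
  set P2 := Dv v2 P with hP2def
  set P12 := Dv v1 P2 with hP12def
  have hP1 : ContDiff ℝ (⊤:ℕ∞) P1 := Dv_contDiff hP v1
  have hP2 : ContDiff ℝ (⊤:ℕ∞) P2 := Dv_contDiff hP v2
  have hP12 : ContDiff ℝ (⊤:ℕ∞) P12 := Dv_contDiff hP2 v1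
  have hPd : Differentiable ℝ P := hP.differentiable (by simp)
  have hP1d : Differentiable ℝ P1 := hP1.differentiable (by simp)
  have hP2d : Differentiable ℝ P2 := hP2.differentiable (by simp)
  have hP12d : Differentiable ℝ P12 := hP12.differentiable (by simp)
  set Q := (fun ε : Fin 3 → ℝ => DAop W (ε, x)) with hQdef
  set Q2 := (fun ε : Fin 3 → ℝ => Dv (Adir 2) (DAop W) (ε, x)) with hQ2def
  set Q12 := (fun ε : Fin 3 → ℝ => Dv (Adir 1) (Dv (Adir 2) (DAop W)) (ε, x)) with hQ12def
  have hDAw : ContDiff ℝ (⊤:ℕ∞) (DAop W) := DAop_contDiff hu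
  have hQ : ContDiff ℝ (⊤:ℕ∞) Q := contDiff_slice_left hDAw x
  have hQ2 : ContDiff ℝ (⊤:ℕ∞) Q2 := contDiff_slice_left (Dv_contDiff hDAw _) x
  have hQ12 : ContDiff ℝ (⊤:ℕ∞) Q12 :=
    contDiff_slice_left (Dv_contDiff (Dv_contDiff hDAw _) _) x
  have hQd : Differentiable ℝ Q := hQ.differentiable (by simp)
  have hQ2d : Differentiable ℝ Q2 := hQ2.differentiable (by simp)
  have hQ12d : Differentiable ℝ Q12 := hQ12.differentiable (by simp)
  -- first derivative in direction v2, as a function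
  have A2 : Dv v2 (gfun u V f x) = fun ε =>
      Q2 ε + V x * P2 ε
        + (P2 ε * P ε * P ε + P ε * P2 ε * P ε + P ε * P ε * P2 ε) - f 2 x := by
    funext ε
    have hF4d : Differentiable ℝ
        (fun ε : Fin 3 → ℝ => ε 0 * f 0 x + ε 1 * f 1 x + ε 2 * f 2 x) := by
      have hd : ∀ (i : Fin 3) (c : ℝ), Differentiable ℝ (fun ε : Fin 3 → ℝ => ε i * c) :=
        fun i c => (ContinuousLinearMap.proj i : (Fin 3 → ℝ) →L[ℝ] ℝ).differentiable.mul_const c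
      exact ((hd 0 _).add (hd 1 _)).add (hd 2 _)
    have s1 : Dv v2 (gfun u V f x) ε
        = Dv v2 (fun ε => DAop W (ε, x) + V x * P ε + P ε * P ε * P ε) ε
          - Dv v2 (fun ε => ε 0 * f 0 x + ε 1 * f 1 x + ε 2 * f 2 x) ε :=
      Dv_sub_apply (((hQd.add (hPd.const_mul _)).add ((hPd.mul hPd).mul hPd)) ε) (hF4d ε) v2
    have s2 : Dv v2 (fun ε => DAop W (ε, x) + V x * P ε + P ε * P ε * P ε) ε
        = Dv v2 (fun ε => DAop W (ε, x) + V x * P ε) ε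
          + Dv v2 (fun ε => P ε * P ε * P ε) ε :=
      Dv_add_apply ((hQd.add (hPd.const_mul _)) ε) (((hPd.mul hPd).mul hPd) ε) v2
    have s3 : Dv v2 (fun ε => DAop W (ε, x) + V x * P ε) ε
        = Dv v2 (fun ε => DAop W (ε, x)) ε + Dv v2 (fun ε => V x * P ε) ε :=
      Dv_add_apply (hQd ε) ((hPd.const_mul _) ε) v2
    have sA : Dv v2 (fun ε => DAop W (ε, x)) ε = Q2 ε :=
      congrFun (Dv_eps_slice hDAw 2 x) ε
    have sB : Dv v2 (fun ε => V x * P ε) ε = V x * P2 ε :=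
      Dv_const_mul_apply (hPd ε) (V x) v2
    have sC : Dv v2 (fun ε => P ε * P ε * P ε) ε
        = P2 ε * P ε * P ε + P ε * P2 ε * P ε + P ε * P ε * P2 ε :=
      Dv_mul3_apply (hPd ε) (hPd ε) (hPd ε) v2
    have sD : Dv v2 (fun ε : Fin 3 → ℝ => ε 0 * f 0 x + ε 1 * f 1 x + ε 2 * f 2 x) ε
        = f 2 x := by
      rw [Dv_linear_apply, hv2]; simp
    rw [s1, s2, s3, sA, sB, sC, sD]
  -- second derivative, as a function
  have A12 : Dv v1 (Dv v2 (gfun u V f x)) = fun ε =>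
      Q12 ε + V x * P12 ε
        + ((P12 ε * P ε * P ε + P2 ε * P1 ε * P ε + P2 ε * P ε * P1 ε)
          + (P1 ε * P2 ε * P ε + P ε * P12 ε * P ε + P ε * P2 ε * P1 ε)
          + (P1 ε * P ε * P2 ε + P ε * P1 ε * P2 ε + P ε * P ε * P12 ε)) := by
    rw [A2]
    funext ε
    have hcube3 : Differentiable ℝ
        (fun ε => P2 ε * P ε * P ε + P ε * P2 ε * P ε + P ε * P ε * P2 ε) :=
      (((hP2d.mul hPd).mul hPd).add ((hPd.mul hP2d).mul hPd)).add ((hPd.mul hPd).mul hP2d)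
    have t1 : Dv v1 (fun ε =>
          Q2 ε + V x * P2 ε
            + (P2 ε * P ε * P ε + P ε * P2 ε * P ε + P ε * P ε * P2 ε) - f 2 x) ε
        = Dv v1 (fun ε => Q2 ε + V x * P2 ε
            + (P2 ε * P ε * P ε + P ε * P2 ε * P ε + P ε * P ε * P2 ε)) ε
          - Dv v1 (fun _ : Fin 3 → ℝ => f 2 x) ε :=
      Dv_sub_apply (((hQ2d.add (hP2d.const_mul _)).add hcube3) ε)
        (differentiable_const _ ε) v1
    have t2 : Dv v1 (fun ε => Q2 ε + V x * P2 ε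
          + (P2 ε * P ε * P ε + P ε * P2 ε * P ε + P ε * P ε * P2 ε)) ε
        = Dv v1 (fun ε => Q2 ε + V x * P2 ε) ε
          + Dv v1 (fun ε => P2 ε * P ε * P ε + P ε * P2 ε * P ε + P ε * P ε * P2 ε) ε :=
      Dv_add_apply ((hQ2d.add (hP2d.const_mul _)) ε) (hcube3 ε) v1
    have t3 : Dv v1 (fun ε => Q2 ε + V x * P2 ε) ε
        = Dv v1 Q2 ε + Dv v1 (fun ε => V x * P2 ε) ε :=
      Dv_add_apply (hQ2d ε) ((hP2d.const_mul _) ε) v1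
    have tA : Dv v1 Q2 ε = Q12 ε :=
      congrFun (Dv_eps_slice (Dv_contDiff hDAw _) 1 x) ε
    have tB : Dv v1 (fun ε => V x * P2 ε) ε = V x * P12 ε :=
      Dv_const_mul_apply (hP2d ε) (V x) v1
    have t4 : Dv v1 (fun ε => P2 ε * P ε * P ε + P ε * P2 ε * P ε + P ε * P ε * P2 ε) ε
        = Dv v1 (fun ε => P2 ε * P ε * P ε + P ε * P2 ε * P ε) ε
          + Dv v1 (fun ε => P ε * P ε * P2 ε) ε :=
      Dv_add_apply ((((hP2d.mul hPd).mul hPd).add ((hPd.mul hP2d).mul hPd)) ε)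
        (((hPd.mul hPd).mul hP2d) ε) v1
    have t5 : Dv v1 (fun ε => P2 ε * P ε * P ε + P ε * P2 ε * P ε) ε
        = Dv v1 (fun ε => P2 ε * P ε * P ε) ε + Dv v1 (fun ε => P ε * P2 ε * P ε) ε :=
      Dv_add_apply (((hP2d.mul hPd).mul hPd) ε) (((hPd.mul hP2d).mul hPd) ε) v1
    have m1 : Dv v1 (fun ε => P2 ε * P ε * P ε) ε
        = P12 ε * P ε * P ε + P2 ε * P1 ε * P ε + P2 ε * P ε * P1 ε :=
      Dv_mul3_apply (hP2d ε) (hPd ε) (hPd ε) v1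
    have m2 : Dv v1 (fun ε => P ε * P2 ε * P ε) ε
        = P1 ε * P2 ε * P ε + P ε * P12 ε * P ε + P ε * P2 ε * P1 ε :=
      Dv_mul3_apply (hPd ε) (hP2d ε) (hPd ε) v1
    have m3 : Dv v1 (fun ε => P ε * P ε * P2 ε) ε
        = P1 ε * P ε * P2 ε + P ε * P1 ε * P2 ε + P ε * P ε * P12 ε :=
      Dv_mul3_apply (hPd ε) (hPd ε) (hP2d ε) v1
    have tD : Dv v1 (fun _ : Fin 3 → ℝ => f 2 x) ε = 0 := Dv_const_apply _ v1 ε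
    rw [t1, t2, t3, tA, tB, t4, t5, m1, m2, m3, tD]
    ring
  -- evaluate the third derivative at 0
  have hP0 : P 0 = 0 := h0 x
  have hl0 : Dv v0 P 0 = lin1 u 0 x := by
    have := congrFun (Dv_phi hu x 0) 0
    rw [hPdef, hv0, this, lin1_eq hu 0]
  have hl1 : P1 0 = lin1 u 1 x := by
    have := congrFun (Dv_phi hu x 1) 0
    rw [hP1def, hPdef, hv1, this, lin1_eq hu 1]
  have hl2 : P2 0 = lin1 u 2 x := by
    have := congrFun (Dv_phi hu x 2) 0
    rw [hP2def, hPdef, hv2, this, lin1_eq hu 2]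
  have hc2 : P2 = fun ε => Dv (Adir 2) W (ε, x) := by
    rw [hP2def, hPdef, hv2]; exact Dv_phi hu x 2
  have hc12 : P12 = fun ε => Dv (Adir 1) (Dv (Adir 2) W) (ε, x) := by
    rw [hP12def, hc2, hv1]; exact Dv_eps_slice (Dv_contDiff hu _) 1 x
  have hlin3 : Dv v0 P12 0 = lin3 u x := by
    rw [hc12, hv0]
    exact (congrFun (Dv_eps_slice (Dv_contDiff (Dv_contDiff hu _) _) 0 x) 0).trans
      (congrFun (lin3_eq hu) x).symm
  have hDA3 : Dv v0 Q12 0 = dAlembert (lin3 u) x := by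
    have e0 : Dv v0 Q12 0
        = Dv (Adir 0) (Dv (Adir 1) (Dv (Adir 2) (DAop W))) (0, x) := by
      rw [hQ12def, hv0]
      exact congrFun (Dv_eps_slice (Dv_contDiff (Dv_contDiff hDAw _) _) 0 x) 0
    rw [e0, Dv_DAop hu (Adir 2), Dv_DAop (Dv_contDiff hu _) (Adir 1),
      Dv_DAop (Dv_contDiff (Dv_contDiff hu _) _) (Adir 0), lin3_eq hu]
    exact (dAlembert_slice (Dv_contDiff (Dv_contDiff (Dv_contDiff hu _) _) _) 0 x).symm
  rw [A12]
  -- now expand the outer derivative at 0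
  have hg1d : Differentiable ℝ
      (fun ε => P12 ε * P ε * P ε + P2 ε * P1 ε * P ε + P2 ε * P ε * P1 ε) :=
    (((hP12d.mul hPd).mul hPd).add ((hP2d.mul hP1d).mul hPd)).add ((hP2d.mul hPd).mul hP1d)
  have hg2d : Differentiable ℝ
      (fun ε => P1 ε * P2 ε * P ε + P ε * P12 ε * P ε + P ε * P2 ε * P1 ε) :=
    (((hP1d.mul hP2d).mul hPd).add ((hPd.mul hP12d).mul hPd)).add ((hPd.mul hP2d).mul hP1d)
  have hg3d : Differentiable ℝ
      (fun ε => P1 ε * P ε * P2 ε + P ε * P1 ε * P2 ε + P ε * P ε * P12 ε) :=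
    (((hP1d.mul hPd).mul hP2d).add ((hPd.mul hP1d).mul hP2d)).add ((hPd.mul hPd).mul hP12d)
  have u1 : Dv v0 (fun ε =>
        Q12 ε + V x * P12 ε
          + ((P12 ε * P ε * P ε + P2 ε * P1 ε * P ε + P2 ε * P ε * P1 ε)
            + (P1 ε * P2 ε * P ε + P ε * P12 ε * P ε + P ε * P2 ε * P1 ε)
            + (P1 ε * P ε * P2 ε + P ε * P1 ε * P2 ε + P ε * P ε * P12 ε))) 0
      = Dv v0 (fun ε => Q12 ε + V x * P12 ε) 0
        + Dv v0 (fun ε =>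
            (P12 ε * P ε * P ε + P2 ε * P1 ε * P ε + P2 ε * P ε * P1 ε)
            + (P1 ε * P2 ε * P ε + P ε * P12 ε * P ε + P ε * P2 ε * P1 ε)
            + (P1 ε * P ε * P2 ε + P ε * P1 ε * P2 ε + P ε * P ε * P12 ε)) 0 :=
    Dv_add_apply ((hQ12d.add (hP12d.const_mul _)) 0)
      (((hg1d.add hg2d).add hg3d) 0) v0
  have u2 : Dv v0 (fun ε => Q12 ε + V x * P12 ε) 0
      = Dv v0 Q12 0 + Dv v0 (fun ε => V x * P12 ε) 0 :=
    Dv_add_apply (hQ12d 0) ((hP12d.const_mul _) 0) v0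
  have u3 : Dv v0 (fun ε => V x * P12 ε) 0 = V x * Dv v0 P12 0 :=
    Dv_const_mul_apply (hP12d 0) (V x) v0
  have u4 : Dv v0 (fun ε =>
        (P12 ε * P ε * P ε + P2 ε * P1 ε * P ε + P2 ε * P ε * P1 ε)
        + (P1 ε * P2 ε * P ε + P ε * P12 ε * P ε + P ε * P2 ε * P1 ε)
        + (P1 ε * P ε * P2 ε + P ε * P1 ε * P2 ε + P ε * P ε * P12 ε)) 0
      = Dv v0 (fun ε =>
          (P12 ε * P ε * P ε + P2 ε * P1 ε * P ε + P2 ε * P ε * P1 ε)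
          + (P1 ε * P2 ε * P ε + P ε * P12 ε * P ε + P ε * P2 ε * P1 ε)) 0
        + Dv v0 (fun ε => P1 ε * P ε * P2 ε + P ε * P1 ε * P2 ε + P ε * P ε * P12 ε) 0 :=
    Dv_add_apply ((hg1d.add hg2d) 0) (hg3d 0) v0
  have u5 : Dv v0 (fun ε =>
        (P12 ε * P ε * P ε + P2 ε * P1 ε * P ε + P2 ε * P ε * P1 ε)
        + (P1 ε * P2 ε * P ε + P ε * P12 ε * P ε + P ε * P2 ε * P1 ε)) 0
      = Dv v0 (fun ε => P12 ε * P ε * P ε + P2 ε * P1 ε * P ε + P2 ε * P ε * P1 ε) 0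
        + Dv v0 (fun ε => P1 ε * P2 ε * P ε + P ε * P12 ε * P ε + P ε * P2 ε * P1 ε) 0 :=
    Dv_add_apply (hg1d 0) (hg2d 0) v0
  have u6 : Dv v0 (fun ε => P12 ε * P ε * P ε + P2 ε * P1 ε * P ε + P2 ε * P ε * P1 ε) 0
      = Dv v0 (fun ε => P12 ε * P ε * P ε + P2 ε * P1 ε * P ε) 0
        + Dv v0 (fun ε => P2 ε * P ε * P1 ε) 0 :=
    Dv_add_apply ((((hP12d.mul hPd).mul hPd).add ((hP2d.mul hP1d).mul hPd)) 0)
      (((hP2d.mul hPd).mul hP1d) 0) v0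
  have u7 : Dv v0 (fun ε => P12 ε * P ε * P ε + P2 ε * P1 ε * P ε) 0
      = Dv v0 (fun ε => P12 ε * P ε * P ε) 0 + Dv v0 (fun ε => P2 ε * P1 ε * P ε) 0 :=
    Dv_add_apply (((hP12d.mul hPd).mul hPd) 0) (((hP2d.mul hP1d).mul hPd) 0) v0
  have u8 : Dv v0 (fun ε => P1 ε * P2 ε * P ε + P ε * P12 ε * P ε + P ε * P2 ε * P1 ε) 0
      = Dv v0 (fun ε => P1 ε * P2 ε * P ε + P ε * P12 ε * P ε) 0
        + Dv v0 (fun ε => P ε * P2 ε * P1 ε) 0 :=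
    Dv_add_apply ((((hP1d.mul hP2d).mul hPd).add ((hPd.mul hP12d).mul hPd)) 0)
      (((hPd.mul hP2d).mul hP1d) 0) v0
  have u9 : Dv v0 (fun ε => P1 ε * P2 ε * P ε + P ε * P12 ε * P ε) 0
      = Dv v0 (fun ε => P1 ε * P2 ε * P ε) 0 + Dv v0 (fun ε => P ε * P12 ε * P ε) 0 :=
    Dv_add_apply (((hP1d.mul hP2d).mul hPd) 0) (((hPd.mul hP12d).mul hPd) 0) v0
  have u10 : Dv v0 (fun ε => P1 ε * P ε * P2 ε + P ε * P1 ε * P2 ε + P ε * P ε * P12 ε) 0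
      = Dv v0 (fun ε => P1 ε * P ε * P2 ε + P ε * P1 ε * P2 ε) 0
        + Dv v0 (fun ε => P ε * P ε * P12 ε) 0 :=
    Dv_add_apply ((((hP1d.mul hPd).mul hP2d).add ((hPd.mul hP1d).mul hP2d)) 0)
      (((hPd.mul hPd).mul hP12d) 0) v0
  have u11 : Dv v0 (fun ε => P1 ε * P ε * P2 ε + P ε * P1 ε * P2 ε) 0
      = Dv v0 (fun ε => P1 ε * P ε * P2 ε) 0 + Dv v0 (fun ε => P ε * P1 ε * P2 ε) 0 :=
    Dv_add_apply (((hP1d.mul hPd).mul hP2d) 0) (((hPd.mul hP1d).mul hP2d) 0) v0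
  have w1 : Dv v0 (fun ε => P12 ε * P ε * P ε) 0
      = Dv v0 P12 0 * P 0 * P 0 + P12 0 * Dv v0 P 0 * P 0 + P12 0 * P 0 * Dv v0 P 0 :=
    Dv_mul3_apply (hP12d 0) (hPd 0) (hPd 0) v0
  have w2 : Dv v0 (fun ε => P2 ε * P1 ε * P ε) 0
      = Dv v0 P2 0 * P1 0 * P 0 + P2 0 * Dv v0 P1 0 * P 0 + P2 0 * P1 0 * Dv v0 P 0 :=
    Dv_mul3_apply (hP2d 0) (hP1d 0) (hPd 0) v0
  have w3 : Dv v0 (fun ε => P2 ε * P ε * P1 ε) 0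
      = Dv v0 P2 0 * P 0 * P1 0 + P2 0 * Dv v0 P 0 * P1 0 + P2 0 * P 0 * Dv v0 P1 0 :=
    Dv_mul3_apply (hP2d 0) (hPd 0) (hP1d 0) v0
  have w4 : Dv v0 (fun ε => P1 ε * P2 ε * P ε) 0
      = Dv v0 P1 0 * P2 0 * P 0 + P1 0 * Dv v0 P2 0 * P 0 + P1 0 * P2 0 * Dv v0 P 0 :=
    Dv_mul3_apply (hP1d 0) (hP2d 0) (hPd 0) v0
  have w5 : Dv v0 (fun ε => P ε * P12 ε * P ε) 0
      = Dv v0 P 0 * P12 0 * P 0 + P 0 * Dv v0 P12 0 * P 0 + P 0 * P12 0 * Dv v0 P 0 :=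
    Dv_mul3_apply (hPd 0) (hP12d 0) (hPd 0) v0
  have w6 : Dv v0 (fun ε => P ε * P2 ε * P1 ε) 0
      = Dv v0 P 0 * P2 0 * P1 0 + P 0 * Dv v0 P2 0 * P1 0 + P 0 * P2 0 * Dv v0 P1 0 :=
    Dv_mul3_apply (hPd 0) (hP2d 0) (hP1d 0) v0
  have w7 : Dv v0 (fun ε => P1 ε * P ε * P2 ε) 0
      = Dv v0 P1 0 * P 0 * P2 0 + P1 0 * Dv v0 P 0 * P2 0 + P1 0 * P 0 * Dv v0 P2 0 :=
    Dv_mul3_apply (hP1d 0) (hPd 0) (hP2d 0) v0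
  have w8 : Dv v0 (fun ε => P ε * P1 ε * P2 ε) 0
      = Dv v0 P 0 * P1 0 * P2 0 + P 0 * Dv v0 P1 0 * P2 0 + P 0 * P1 0 * Dv v0 P2 0 :=
    Dv_mul3_apply (hPd 0) (hP1d 0) (hP2d 0) v0
  have w9 : Dv v0 (fun ε => P ε * P ε * P12 ε) 0
      = Dv v0 P 0 * P 0 * P12 0 + P 0 * Dv v0 P 0 * P12 0 + P 0 * P 0 * Dv v0 P12 0 :=
    Dv_mul3_apply (hPd 0) (hPd 0) (hP12d 0) v0
  rw [u1, u2, u3, u4, u5, u6, u7, u8, u9, u10, u11, w1, w2, w3, w4, w5, w6, w7, w8, w9,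
    hP0, hl0, hl1, hl2, hlin3, hDA3]
  ring

end PDE
end Stmt10


theorem statement10 (n : ℕ) (hn : 2 ≤ n)
    (V : X n → ℝ) (hV : Continuous V)
    (f : Fin 3 → (X n → ℝ))
    (u : (Fin 3 → ℝ) → X n → ℝ)
    (hu : ContDiff ℝ (⊤ : ℕ∞) (fun p : (Fin 3 → ℝ) × X n => u p.1 p.2))
    (U : Set (Fin 3 → ℝ)) (hU : U ∈ nhds (0 : Fin 3 → ℝ))
    (heq : ∀ ε ∈ U, ∀ x : X n,
      dAlembert (u ε) x + V x * u ε x + (u ε x) ^ 3 =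
        ε 0 * f 0 x + ε 1 * f 1 x + ε 2 * f 2 x)
    (h0 : ∀ x : X n, u 0 x = 0) :
    (∀ j : Fin 3, ∀ x : X n,
      dAlembert (lin1 u j) x + V x * lin1 u j x = f j x) ∧
    (∀ x : X n,
      dAlembert (lin3 u) x + V x * lin3 u x =
        -6 * lin1 u 0 x * lin1 u 1 x * lin1 u 2 x) := by
  have hW : ContDiff ℝ (⊤:ℕ∞) (Stmt10.wfun u) := hu
  constructor
  · intro j x
    have hev := Stmt10.gfun_eventually hW hU heq x
    have hz : Dv (Pi.single j 1) (Stmt10.gfun u V f x) 0 = 0 := by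
      show fderiv ℝ (Stmt10.gfun u V f x) 0 (Pi.single j 1) = 0
      rw [hev.fderiv_eq]
      simp
    rw [Stmt10.Dv_gfun hW h0 x j] at hz
    linarith
  · intro x
    have hev := Stmt10.gfun_eventually hW hU heq x
    have hev2 : Dv (Pi.single 2 1) (Stmt10.gfun u V f x) =ᶠ[nhds 0] fun _ => 0 := by
      filter_upwards [hev.fderiv (𝕜 := ℝ)] with ε hε
      show fderiv ℝ (Stmt10.gfun u V f x) ε (Pi.single 2 1) = 0
      rw [hε]
      simp
    have hev12 : Dv (Pi.single 1 1) (Dv (Pi.single 2 1) (Stmt10.gfun u V f x))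
        =ᶠ[nhds 0] fun _ => 0 := by
      filter_upwards [hev2.fderiv (𝕜 := ℝ)] with ε hε
      show fderiv ℝ (Dv (Pi.single 2 1) (Stmt10.gfun u V f x)) ε (Pi.single 1 1) = 0
      rw [hε]
      simp
    have hz : Dv (Pi.single 0 1)
        (Dv (Pi.single 1 1) (Dv (Pi.single 2 1) (Stmt10.gfun u V f x))) 0 = 0 := by
      show fderiv ℝ (Dv (Pi.single 1 1) (Dv (Pi.single 2 1) (Stmt10.gfun u V f x))) 0
        (Pi.single 0 1) = 0
      rw [hev12.fderiv_eq]
      simp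
    rw [Stmt10.Dv3_gfun hW h0 x] at hz
    linarith
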